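/- arXiv:0807.2350 — 7 statements merged into one kernel-verified Lean document; each statement's English description precedes it below -/
import Mathlib

section
/- Let r be a real number with 0 < r < 1 and let z be a complex number with |z| ≤ r. Then |log(1+z)| ≤ (|log(1−r)|/r)·|z|, where log denotes the principal branch of the complex logarithm. -/
/-!
On `‖w‖ ≤ r` the Taylor series of `log (1 + w)` is dominated termwise by that of
`-log (1 - ‖w‖)`, so `log (1 + ·)` maps the closed disc of radius `r` into the closed disc of
radius `-log (1 - r)` and vanishes at `0`; the Schwarz lemma gives the linear bound.
-/

open Metric Set

namespace Complex

variable {E : Type*} [NormedAddCommGroup E] [NormedSpace ℂ E]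

theorem dist_le_div_mul_dist_of_mapsTo_closedBall {f : ℂ → E} {c z : ℂ} {R₁ R₂ : ℝ}
    (hR₁ : 0 < R₁) (hd : DifferentiableOn ℂ f (ball c R₁))
    (h_maps : MapsTo f (closedBall c R₁) (closedBall (f c) R₂)) (hz : z ∈ closedBall c R₁) :
    dist (f z) (f c) ≤ R₂ / R₁ * dist z c := by
  rcases (mem_closedBall.mp hz).lt_or_eq with hz_lt | hz_eq
  · exact dist_le_div_mul_dist_of_mapsTo_ball hd (h_maps.mono_left ball_subset_closedBall) hz_lt
  · rw [hz_eq, div_mul_cancel₀ _ hR₁.ne']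
    exact h_maps hz

theorem norm_log_one_add_le_neg_log_one_sub_norm {z : ℂ} (hz : ‖z‖ < 1) :
    ‖log (1 + z)‖ ≤ -Real.log (1 - ‖z‖) := by
  have h_real : HasSum (fun n : ℕ ↦ ‖z‖ ^ n / n) (-Real.log (1 - ‖z‖)) :=
    (hasSum_nat_add_iff' 1).mp <| by
      simpa using Real.hasSum_pow_div_log_of_abs_lt_one (by rwa [abs_norm])
  exact (hasSum_taylorSeries_log hz).norm_le_of_bounded h_real fun n ↦ by simp

theorem differentiableOn_log_one_add_ball :
    DifferentiableOn ℂ (fun w ↦ log (1 + w)) (ball 0 1) := fun _ hw ↦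
  ((differentiableAt_const 1).add differentiableAt_id).clog
    (mem_slitPlane_of_norm_lt_one (mem_ball_zero_iff.mp hw)) |>.differentiableWithinAt

theorem mapsTo_log_one_add_closedBall {r : ℝ} (hr : r < 1) :
    MapsTo (fun w ↦ log (1 + w)) (closedBall 0 r) (closedBall 0 (-Real.log (1 - r))) := by
  intro w hw
  rw [mem_closedBall_zero_iff] at hw ⊢
  have hw_pos : 0 < 1 - ‖w‖ := by linarith
  calc ‖log (1 + w)‖ ≤ -Real.log (1 - ‖w‖) :=
        norm_log_one_add_le_neg_log_one_sub_norm (hw.trans_lt hr)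
    _ ≤ -Real.log (1 - r) := by gcongr

end Complex

open Complex in
/-- For `0 < r < 1` and `|z| ≤ r`, one has `|log(1+z)| ≤ (|log(1-r)|/r)·|z|`,
where `log` is the principal branch of the complex logarithm. -/
theorem abs_log_one_add_le (r : ℝ) (hr0 : 0 < r) (hr1 : r < 1)
    (z : ℂ) (hz : ‖z‖ ≤ r) :
    ‖Complex.log (1 + z)‖ ≤ |Real.log (1 - r)| / r * ‖z‖ := by
  have h_abs : |Real.log (1 - r)| = -Real.log (1 - r) :=
    abs_of_nonpos (Real.log_nonpos (by linarith) (by linarith))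
  have h_schwarz := dist_le_div_mul_dist_of_mapsTo_closedBall hr0
    (differentiableOn_log_one_add_ball.mono (ball_subset_ball hr1.le))
    (by simpa using mapsTo_log_one_add_closedBall hr1) (mem_closedBall_zero_iff.mpr hz)
  simpa [h_abs] using h_schwarz
end

section
/- For every τ in the upper half-plane ℍ with |q_τ| ≤ 0.005 one has |(12/(2πi)⁴)·c₂(τ) − 1 − 240·q_τ| ≤ 2204·|q_τ|². -/
open scoped Real

/-- `q_τ = e^{2πiτ}`. -/
noncomputable def qPar (τ : ℂ) : ℂ := Complex.exp (2 * Real.pi * Complex.I * τ)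

/-- `c₂(τ) = ((2πi)⁴/12)·(1 + 240·Σ_{n≥1} n³ qⁿ/(1-qⁿ))`. -/
noncomputable def c₂fun (τ : ℂ) : ℂ :=
  (2 * Real.pi * Complex.I) ^ 4 / 12 *
    (1 + 240 * ∑' n : ℕ, ((n : ℂ) + 1) ^ 3 * qPar τ ^ (n + 1) / (1 - qPar τ ^ (n + 1)))

/-- `Δ(τ) = (2πi)¹²·q·∏_{n≥1}(1-qⁿ)²⁴`. -/
noncomputable def Δfun (τ : ℂ) : ℂ :=
  (2 * Real.pi * Complex.I) ^ 12 * qPar τ * ∏' n : ℕ, (1 - qPar τ ^ (n + 1)) ^ 24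

/-- The modular invariant `j(τ) = (12 c₂(τ))³/Δ(τ)`. -/
noncomputable def jfun (τ : ℂ) : ℂ := (12 * c₂fun τ) ^ 3 / Δfun τ

/-! Splitting off its first term, `∑ n³qⁿ/(1 - qⁿ) - q = q²/(1 - q) + ∑_{n ≥ 2} n³qⁿ/(1 - qⁿ)`.
By Bernoulli, `(n + 2)³ ≤ 8 (27/8)ⁿ`, so with `r = |q|` the tail is dominated by a geometric series
and the difference is at most `r²/(1 - r) · (1 + 8/(1 - 27r/8))`. At `r = 0.005` this gives the
constant `240/0.995 · (1 + 8/0.983125) ≈ 2203.98`. -/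

variable {𝕜 : Type*} [NormedField 𝕜]

def cubeLambertTerm (q : 𝕜) (n : ℕ) : 𝕜 := (n : 𝕜) ^ 3 * q ^ n / (1 - q ^ n)

lemma one_sub_norm_le_norm_one_sub_pow {q : 𝕜} (hq : ‖q‖ ≤ 1) {n : ℕ} (hn : n ≠ 0) :
    1 - ‖q‖ ≤ ‖1 - q ^ n‖ :=
  calc 1 - ‖q‖ ≤ 1 - ‖q‖ ^ n := by gcongr; exact pow_le_of_le_one (norm_nonneg q) hq hn
    _ = ‖(1 : 𝕜)‖ - ‖q ^ n‖ := by rw [norm_one, norm_pow]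
    _ ≤ ‖1 - q ^ n‖ := norm_sub_norm_le _ _

lemma norm_cubeLambertTerm_le {q : 𝕜} (hq : ‖q‖ < 1) {n : ℕ} (hn : n ≠ 0) :
    ‖cubeLambertTerm q n‖ ≤ (n : ℝ) ^ 3 * ‖q‖ ^ n / (1 - ‖q‖) := by
  rw [cubeLambertTerm, norm_div, norm_mul, norm_pow, norm_pow]
  have hcast : ‖(n : 𝕜)‖ ≤ n := by simpa using Nat.norm_cast_le (α := 𝕜) n
  gcongr
  exact one_sub_norm_le_norm_one_sub_pow hq.le hn

lemma add_two_pow_three_le (n : ℕ) : ((n : ℝ) + 2) ^ 3 ≤ 8 * (27 / 8) ^ n := by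
  have bernoulli : 1 + n * (1 / 2 : ℝ) ≤ (1 + 1 / 2) ^ n := one_add_mul_le_pow (by norm_num) n
  calc ((n : ℝ) + 2) ^ 3 = 8 * (1 + n * (1 / 2)) ^ 3 := by ring
    _ ≤ 8 * ((1 + 1 / 2) ^ n) ^ 3 := by gcongr
    _ = 8 * (27 / 8) ^ n := by rw [← pow_mul, mul_comm n 3, pow_mul]; norm_num

lemma norm_cubeLambertTerm_add_two_le {q : 𝕜} (hq : ‖q‖ < 1) (n : ℕ) :
    ‖cubeLambertTerm q (n + 2)‖ ≤ 8 * ‖q‖ ^ 2 / (1 - ‖q‖) * (27 / 8 * ‖q‖) ^ n := by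
  calc ‖cubeLambertTerm q (n + 2)‖ ≤ ((n : ℝ) + 2) ^ 3 * ‖q‖ ^ (n + 2) / (1 - ‖q‖) := by
        exact_mod_cast norm_cubeLambertTerm_le hq (n + 1).succ_ne_zero
    _ ≤ 8 * (27 / 8) ^ n * ‖q‖ ^ (n + 2) / (1 - ‖q‖) := by gcongr; exact add_two_pow_three_le n
    _ = 8 * ‖q‖ ^ 2 / (1 - ‖q‖) * (27 / 8 * ‖q‖) ^ n := by ring

lemma hasSum_cubeLambertTerm_add_two_majorant {q : 𝕜} (hq : ‖q‖ < 8 / 27) :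
    HasSum (fun n ↦ 8 * ‖q‖ ^ 2 / (1 - ‖q‖) * (27 / 8 * ‖q‖) ^ n)
      (8 * ‖q‖ ^ 2 / (1 - ‖q‖) * (1 - 27 / 8 * ‖q‖)⁻¹) :=
  (hasSum_geometric_of_lt_one (by positivity) (by linarith)).mul_left _

lemma norm_tsum_cubeLambertTerm_add_two_le {q : 𝕜} (hq : ‖q‖ < 8 / 27) :
    ‖∑' n, cubeLambertTerm q (n + 2)‖ ≤ 8 * ‖q‖ ^ 2 / (1 - ‖q‖) * (1 - 27 / 8 * ‖q‖)⁻¹ :=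
  tsum_of_norm_bounded (hasSum_cubeLambertTerm_add_two_majorant hq)
    (norm_cubeLambertTerm_add_two_le (by linarith))

section Complete

variable [CompleteSpace 𝕜] {q : 𝕜}

lemma summable_cubeLambertTerm_add_two (hq : ‖q‖ < 8 / 27) :
    Summable fun n ↦ cubeLambertTerm q (n + 2) :=
  .of_norm_bounded (hasSum_cubeLambertTerm_add_two_majorant hq).summable
    (norm_cubeLambertTerm_add_two_le (by linarith))

lemma tsum_cubeLambertTerm_succ_sub_self (hq : ‖q‖ < 8 / 27) :
    ∑' n, cubeLambertTerm q (n + 1) - q = q ^ 2 / (1 - q) + ∑' n, cubeLambertTerm q (n + 2) := by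
  have hq1 : 1 - q ≠ 0 := sub_ne_zero.2 fun h ↦ by norm_num [← h] at hq
  have hsplit : ∑' n, cubeLambertTerm q (n + 1) =
      cubeLambertTerm q 1 + ∑' n, cubeLambertTerm q (n + 2) :=
    tsum_eq_zero_add' (summable_cubeLambertTerm_add_two hq)
  rw [hsplit, cubeLambertTerm, Nat.cast_one, one_pow, pow_one, one_mul]
  field_simp
  ring

lemma norm_tsum_cubeLambertTerm_succ_sub_self_le (hq : ‖q‖ < 8 / 27) :
    ‖∑' n, cubeLambertTerm q (n + 1) - q‖ ≤
      ‖q‖ ^ 2 / (1 - ‖q‖) * (1 + 8 * (1 - 27 / 8 * ‖q‖)⁻¹) := by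
  have hq1 : 1 - ‖q‖ ≤ ‖1 - q‖ := by
    simpa using one_sub_norm_le_norm_one_sub_pow (n := 1) (by linarith) one_ne_zero
  rw [tsum_cubeLambertTerm_succ_sub_self hq]
  calc _ ≤ ‖q ^ 2 / (1 - q)‖ + ‖∑' n, cubeLambertTerm q (n + 2)‖ := norm_add_le _ _
    _ ≤ ‖q‖ ^ 2 / (1 - ‖q‖) + 8 * ‖q‖ ^ 2 / (1 - ‖q‖) * (1 - 27 / 8 * ‖q‖)⁻¹ := by
        rw [norm_div, norm_pow]
        gcongr
        · linarith
        · exact norm_tsum_cubeLambertTerm_add_two_le hq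
    _ = _ := by ring

end Complete

theorem abs_c2_estimate_general (τ : ℂ) (hq : ‖qPar τ‖ ≤ 0.005) :
    ‖12 / (2 * Real.pi * Complex.I) ^ 4 * c₂fun τ - 1 - 240 * qPar τ‖ ≤
      2204 * ‖qPar τ‖ ^ 2 := by
  have hc₂ : 12 / (2 * Real.pi * Complex.I) ^ 4 * c₂fun τ - 1 - 240 * qPar τ =
      240 * (∑' n, cubeLambertTerm (qPar τ) (n + 1) - qPar τ) := by
    have : (2 * Real.pi * Complex.I : ℂ) ^ 4 ≠ 0 := by simp [Real.pi_ne_zero]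
    simp only [c₂fun, cubeLambertTerm, Nat.cast_add_one]
    field_simp
    ring
  rw [hc₂, norm_mul, Complex.norm_ofNat]
  set r := ‖qPar τ‖
  have hr : 0 < 1 - 27 / 8 * r := by linarith
  calc 240 * ‖∑' n, cubeLambertTerm (qPar τ) (n + 1) - qPar τ‖
      ≤ 240 * (r ^ 2 / (1 - r) * (1 + 8 * (1 - 27 / 8 * r)⁻¹)) := by
        gcongr
        exact norm_tsum_cubeLambertTerm_succ_sub_self_le (by linarith)
    _ ≤ 240 * (r ^ 2 / (1 - 0.005) * (1 + 8 * (1 - 27 / 8 * 0.005)⁻¹)) := by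
        gcongr
    _ = 240 / (1 - 0.005) * (1 + 8 * (1 - 27 / 8 * 0.005)⁻¹) * r ^ 2 := by ring
    _ ≤ 2204 * r ^ 2 := by gcongr; norm_num

/-- For `τ ∈ ℍ` with `|q_τ| ≤ 0.005` one has
`|(12/(2πi)⁴)·c₂(τ) − 1 − 240·q_τ| ≤ 2204·|q_τ|²`. -/
theorem abs_c2_estimate (τ : ℂ) (hτ : 0 < τ.im) (hq : ‖qPar τ‖ ≤ 0.005) :
    ‖12 / (2 * Real.pi * Complex.I) ^ 4 * c₂fun τ - 1 - 240 * qPar τ‖ ≤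
      2204 * ‖qPar τ‖ ^ 2 :=
  abs_c2_estimate_general τ hq
end

section
/- For every τ in the upper half-plane ℍ with |q_τ| ≤ 0.005 one has 24·|Σ_{n=2}^∞ log(1 − q_τⁿ)| ≤ 24.3·|q_τ|²; equivalently, the logarithm of (2πi)¹²·q_τ·(1−q_τ)²⁴/Δ(τ) defined as 24·Σ_{n=2}^∞ log(1−q_τⁿ) has absolute value at most 24.3·|q_τ|². -/
/-!
For `‖w‖ < 1` the Taylor bound for `log (1 + z) - z` gives `‖log (1 - w)‖ ≤ ‖w‖ / (1 - ‖w‖)`.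
With `r = ‖q‖`, the term `log (1 - qⁿ⁺²)` is therefore at most `r ^ (n + 2) / (1 - r)`, and summing
the geometric series bounds the whole sum by `r² / (1 - r)²`; finally `24 / 0.995² < 24.3`.
-/

open scoped Real

namespace Complex

lemma norm_log_one_sub_le {z : ℂ} (hz : ‖z‖ < 1) : ‖log (1 - z)‖ ≤ ‖z‖ / (1 - ‖z‖) := by
  have hpos : 0 < 1 - ‖z‖ := sub_pos.mpr hz
  have h := norm_log_one_add_le (z := -z) (by rwa [norm_neg])
  rw [← sub_eq_add_neg, norm_neg] at h
  refine h.trans (le_of_sub_nonneg ?_)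
  have key : ‖z‖ / (1 - ‖z‖) - (‖z‖ ^ 2 * (1 - ‖z‖)⁻¹ / 2 + ‖z‖) = ‖z‖ ^ 2 / (2 * (1 - ‖z‖)) := by
    field_simp
    ring
  rw [key]
  positivity

lemma norm_log_one_sub_pow_le {q : ℂ} (hq : ‖q‖ < 1) {n : ℕ} (hn : n ≠ 0) :
    ‖log (1 - q ^ n)‖ ≤ ‖q‖ ^ n / (1 - ‖q‖) := by
  have hqn : ‖q‖ ^ n ≤ ‖q‖ := pow_le_of_le_one (norm_nonneg q) hq.le hn
  calc ‖log (1 - q ^ n)‖ ≤ ‖q‖ ^ n / (1 - ‖q‖ ^ n) := by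
        have h := norm_log_one_sub_le (z := q ^ n) (by rw [norm_pow]; exact hqn.trans_lt hq)
        rwa [norm_pow] at h
    _ ≤ ‖q‖ ^ n / (1 - ‖q‖) := by
        gcongr

lemma norm_tsum_log_one_sub_pow_add_le {q : ℂ} (hq : ‖q‖ < 1) {k : ℕ} (hk : k ≠ 0) :
    ‖∑' n : ℕ, log (1 - q ^ (n + k))‖ ≤ ‖q‖ ^ k / (1 - ‖q‖) ^ 2 := by
  set r := ‖q‖
  have hr0 : 0 ≤ r := norm_nonneg q
  have hbound (n : ℕ) : ‖log (1 - q ^ (n + k))‖ ≤ r ^ k / (1 - r) * r ^ n := by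
    rw [div_mul_eq_mul_div, ← pow_add, add_comm k]
    exact norm_log_one_sub_pow_le hq (by omega)
  have hgeom : HasSum (fun n : ℕ ↦ r ^ k / (1 - r) * r ^ n) (r ^ k / (1 - r) * (1 - r)⁻¹) :=
    (hasSum_geometric_of_lt_one hr0 hq).mul_left _
  calc ‖∑' n : ℕ, log (1 - q ^ (n + k))‖
      ≤ ∑' n : ℕ, r ^ k / (1 - r) * r ^ n := tsum_of_norm_bounded hgeom.summable.hasSum hbound
    _ = r ^ k / (1 - r) ^ 2 := by rw [hgeom.tsum_eq, sq, ← div_div, ← div_eq_mul_inv]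

end Complex

theorem abs_log_delta_estimate_general (τ : ℂ) (hq : ‖qPar τ‖ ≤ 0.005) :
    24 * ‖∑' n : ℕ, Complex.log (1 - qPar τ ^ (n + 2))‖ ≤
      24.3 * ‖qPar τ‖ ^ 2 := by
  set r := ‖qPar τ‖
  have hr0 : 0 ≤ r := norm_nonneg _
  have hsum := Complex.norm_tsum_log_one_sub_pow_add_le (q := qPar τ) (by linarith) two_ne_zero
  have hden : (0.99 : ℝ) ≤ (1 - r) ^ 2 := by nlinarith
  calc 24 * ‖∑' n : ℕ, Complex.log (1 - qPar τ ^ (n + 2))‖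
      ≤ 24 * (r ^ 2 / (1 - r) ^ 2) := by gcongr
    _ ≤ 24 * (r ^ 2 / 0.99) := by gcongr
    _ = 24 / 0.99 * r ^ 2 := by ring
    _ ≤ 24.3 * r ^ 2 := by gcongr; norm_num

/-- For `τ ∈ ℍ` with `|q_τ| ≤ 0.005`: `24·|Σ_{n≥2} log(1−q_τⁿ)| ≤ 24.3·|q_τ|²`;
equivalently, the logarithm of `(2πi)¹²·q_τ·(1−q_τ)²⁴/Δ(τ)`, defined as
`24·Σ_{n≥2} log(1−q_τⁿ)`, has absolute value at most `24.3·|q_τ|²`. -/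
theorem abs_log_delta_estimate (τ : ℂ) (hτ : 0 < τ.im) (hq : ‖qPar τ‖ ≤ 0.005) :
    24 * ‖∑' n : ℕ, Complex.log (1 - qPar τ ^ (n + 2))‖ ≤
      24.3 * ‖qPar τ‖ ^ 2 :=
  abs_log_delta_estimate_general τ hq
end

section
/- For every τ in the upper half-plane ℍ with |q_τ| ≤ e^{−π√3} (in particular for every τ in the standard fundamental domain of SL₂(ℤ), since Im τ ≥ √3/2 there), either |j(τ)| ≤ 2500 or |q_τ| < 0.001. -/
open scoped Real

/-!
On `|q| < 1` one has `j = (1 + 240 L(q))³ / (q φ(q)²⁴)` with the Lambert series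
`L(q) = Σ n³ qⁿ / (1 - qⁿ)` and Euler's function `φ(q) = ∏ (1 - qⁿ)`. Crude estimates suffice:
`n³ ≤ 8ⁿ⁻¹` gives `|L(q)| ≤ |q| / ((1 - |q|)(1 - 8|q|))`, and the Weierstrass product inequality
`∏ (1 - aₙ) ≥ 1 - Σ aₙ` gives `|φ(q)| ≥ 1 - |q| / (1 - |q|)`. For `|q| ≤ 0.0044` this yields
`|j| ≤ (1 + 250.2|q|)³ / (|q| (1 - 24.2|q|))`, a cubic over a quadratic that is at most `2500`
on `0.001 ≤ |q| ≤ 0.0044`; finally `e^{-π√3} ≤ 0.0044`.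
-/

theorem exp_neg_pi_mul_sqrt_three_le : Real.exp (-π * √3) ≤ 0.0044 := by
  have h3 : (1.732 : ℝ) ≤ √3 := Real.le_sqrt_of_sq_le (by norm_num)
  have hpi : (5.441 : ℝ) ≤ π * √3 := by nlinarith [Real.pi_gt_d6]
  have he : (2.718 : ℝ) ≤ Real.exp 1 := by linarith [Real.exp_one_gt_d9]
  have hexp : (227.3 : ℝ) ≤ Real.exp (π * √3) :=
    calc (227.3 : ℝ) ≤ 2.718 ^ 5 * (1 + 0.441 + 0.441 ^ 2 / 2) := by norm_num
      _ ≤ Real.exp 1 ^ 5 * Real.exp 0.441 := by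
        gcongr
        exact Real.quadratic_le_exp_of_nonneg (by norm_num)
      _ = Real.exp 5.441 := by rw [← Real.exp_nat_mul, ← Real.exp_add]; norm_num
      _ ≤ Real.exp (π * √3) := Real.exp_le_exp.mpr hpi
  rw [neg_mul, Real.exp_neg, inv_le_comm₀ (Real.exp_pos _) (by norm_num)]
  linarith

section NormedField

variable {𝕜 : Type*} [NormedField 𝕜]

theorem one_sub_norm_le_norm_one_sub_pow_succ {q : 𝕜} (hq : ‖q‖ ≤ 1) (n : ℕ) :
    1 - ‖q‖ ≤ ‖1 - q ^ (n + 1)‖ :=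
  calc 1 - ‖q‖ ≤ ‖(1 : 𝕜)‖ - ‖q ^ (n + 1)‖ := by
        rw [norm_one, norm_pow]
        linarith [pow_le_of_le_one (norm_nonneg q) hq (n := n + 1) (by omega)]
    _ ≤ ‖1 - q ^ (n + 1)‖ := norm_sub_norm_le _ _

theorem Finset.one_sub_sum_norm_le_norm_prod_one_add {ι : Type*} (s : Finset ι) {f : ι → 𝕜}
    (hf : ∀ i ∈ s, ‖f i‖ ≤ 1) : 1 - ∑ i ∈ s, ‖f i‖ ≤ ‖∏ i ∈ s, (1 + f i)‖ := by
  classical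
  induction s using Finset.induction_on with
  | empty => simp
  | insert i s hi ih =>
    rw [Finset.sum_insert hi, Finset.prod_insert hi, norm_mul]
    have hfi : ‖f i‖ ≤ 1 := hf i (Finset.mem_insert_self i s)
    have hP : 1 - ∑ j ∈ s, ‖f j‖ ≤ ‖∏ j ∈ s, (1 + f j)‖ :=
      ih fun j hj => hf j (Finset.mem_insert_of_mem hj)
    have h1 : 1 - ‖f i‖ ≤ ‖1 + f i‖ := by
      simpa using norm_sub_norm_le (1 : 𝕜) (-f i)
    have hs : 0 ≤ ∑ j ∈ s, ‖f j‖ := Finset.sum_nonneg fun j _ => norm_nonneg _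
    calc 1 - (‖f i‖ + ∑ j ∈ s, ‖f j‖) ≤ (1 - ‖f i‖) * (1 - ∑ j ∈ s, ‖f j‖) := by
          nlinarith [norm_nonneg (f i)]
      _ ≤ (1 - ‖f i‖) * ‖∏ j ∈ s, (1 + f j)‖ := mul_le_mul_of_nonneg_left hP (by linarith)
      _ ≤ ‖1 + f i‖ * ‖∏ j ∈ s, (1 + f j)‖ := mul_le_mul_of_nonneg_right h1 (norm_nonneg _)

theorem one_sub_tsum_norm_le_norm_tprod_one_add {ι : Type*} {f : ι → 𝕜}
    (hf : Summable (‖f ·‖)) (hf1 : ∀ i, ‖f i‖ ≤ 1) :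
    1 - ∑' i, ‖f i‖ ≤ ‖∏' i, (1 + f i)‖ := by
  by_cases hm : Multipliable (1 + f ·)
  · refine ge_of_tendsto' (continuous_norm.tendsto _ |>.comp hm.hasProd) fun s => ?_
    calc 1 - ∑' i, ‖f i‖ ≤ 1 - ∑ i ∈ s, ‖f i‖ := by
          linarith [hf.sum_le_tsum s fun i _ => norm_nonneg (f i)]
      _ ≤ ‖∏ i ∈ s, (1 + f i)‖ := s.one_sub_sum_norm_le_norm_prod_one_add fun i _ => hf1 i
  · -- a divergent `∏'` is `1` by convention
    rw [tprod_eq_one_of_not_multipliable hm, norm_one]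
    linarith [(tsum_nonneg fun i => norm_nonneg (f i) : 0 ≤ ∑' i, ‖f i‖)]

end NormedField

noncomputable def lambertSigma3 (q : ℂ) : ℂ :=
  ∑' n : ℕ, ((n : ℂ) + 1) ^ 3 * q ^ (n + 1) / (1 - q ^ (n + 1))

noncomputable def eulerFunction (q : ℂ) : ℂ := ∏' n : ℕ, (1 - q ^ (n + 1))

theorem succ_pow_three_le_eight_pow (n : ℕ) : (n + 1) ^ 3 ≤ 8 ^ n :=
  calc (n + 1) ^ 3 ≤ (2 ^ n) ^ 3 := Nat.pow_le_pow_left n.lt_two_pow_self 3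
    _ = 8 ^ n := by rw [← pow_mul, mul_comm, pow_mul]; norm_num

theorem norm_lambertSigma3_le {q : ℂ} (hq : 8 * ‖q‖ < 1) :
    ‖lambertSigma3 q‖ ≤ ‖q‖ / ((1 - ‖q‖) * (1 - 8 * ‖q‖)) := by
  set x := ‖q‖
  have hx1 : 0 < 1 - x := by linarith
  have hsum : HasSum (fun n : ℕ => x / (1 - x) * (8 * x) ^ n) (x / (1 - x) * (1 - 8 * x)⁻¹) :=
    (hasSum_geometric_of_lt_one (by positivity) hq).mul_left _
  refine (tsum_of_norm_bounded hsum fun n => ?_).trans_eq (by field_simp)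
  have hden : 1 - x ≤ ‖1 - q ^ (n + 1)‖ :=
    one_sub_norm_le_norm_one_sub_pow_succ (by linarith) n
  have hcube : ((n : ℝ) + 1) ^ 3 ≤ 8 ^ n := by exact_mod_cast succ_pow_three_le_eight_pow n
  calc ‖((n : ℂ) + 1) ^ 3 * q ^ (n + 1) / (1 - q ^ (n + 1))‖
        = ((n : ℝ) + 1) ^ 3 * x ^ (n + 1) / ‖1 - q ^ (n + 1)‖ := by
          rw [norm_div, norm_mul, norm_pow, norm_pow]
          norm_cast
    _ ≤ 8 ^ n * x ^ (n + 1) / (1 - x) := by gcongr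
    _ = x / (1 - x) * (8 * x) ^ n := by ring

theorem norm_eulerFunction_ge {q : ℂ} (hq : ‖q‖ < 1) :
    1 - ‖q‖ / (1 - ‖q‖) ≤ ‖eulerFunction q‖ := by
  set x := ‖q‖
  have hsum : HasSum (fun n : ℕ => ‖-q ^ (n + 1)‖) (x / (1 - x)) := by
    simpa [pow_succ', div_eq_mul_inv] using
      (hasSum_geometric_of_lt_one (norm_nonneg q) hq).mul_left x
  have hpow (n : ℕ) : ‖-q ^ (n + 1)‖ ≤ 1 := by
    simpa using pow_le_one₀ (norm_nonneg q) hq.le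
  have h := one_sub_tsum_norm_le_norm_tprod_one_add hsum.summable hpow
  rw [hsum.tsum_eq] at h
  simpa [eulerFunction, sub_eq_add_neg] using h

theorem jfun_eq {τ : ℂ} (hq : ‖qPar τ‖ < 1) :
    jfun τ = (1 + 240 * lambertSigma3 (qPar τ)) ^ 3 /
      (qPar τ * eulerFunction (qPar τ) ^ 24) := by
  have h2πi : (2 * π * Complex.I : ℂ) ≠ 0 := by simp [Real.pi_ne_zero]
  rw [jfun, c₂fun, Δfun, eulerFunction, ← (ModularForm.multipliable_one_sub_pow hq).tprod_pow,
    lambertSigma3]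
  field_simp

theorem norm_one_add_mul_lambertSigma3_le {q : ℂ} (hq : ‖q‖ ≤ 0.0044) :
    ‖1 + 240 * lambertSigma3 q‖ ≤ 1 + 250.2 * ‖q‖ := by
  have hx0 : 0 ≤ ‖q‖ := norm_nonneg q
  have hL : ‖q‖ / ((1 - ‖q‖) * (1 - 8 * ‖q‖)) ≤ 1.0425 * ‖q‖ := by
    rw [div_le_iff₀ (by nlinarith)]
    nlinarith [mul_nonneg hx0 (sub_nonneg.2 hq), pow_nonneg hx0 3]
  calc ‖1 + 240 * lambertSigma3 q‖ ≤ 1 + 240 * ‖lambertSigma3 q‖ := by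
        simpa using norm_add_le (1 : ℂ) (240 * lambertSigma3 q)
    _ ≤ 1 + 240 * (‖q‖ / ((1 - ‖q‖) * (1 - 8 * ‖q‖))) := by
        gcongr; exact norm_lambertSigma3_le (by linarith)
    _ ≤ 1 + 250.2 * ‖q‖ := by linarith

theorem one_sub_mul_le_norm_eulerFunction_pow {q : ℂ} (hq : ‖q‖ ≤ 0.0044) :
    1 - 24.2 * ‖q‖ ≤ ‖eulerFunction q‖ ^ 24 := by
  have hx0 : 0 ≤ ‖q‖ := norm_nonneg q
  have hr : ‖q‖ / (1 - ‖q‖) ≤ 1.005 * ‖q‖ := by rw [div_le_iff₀ (by linarith)]; nlinarith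
  have hr0 : 0 ≤ ‖q‖ / (1 - ‖q‖) := div_nonneg hx0 (by linarith)
  calc 1 - 24.2 * ‖q‖ ≤ 1 + (24 : ℕ) * -(‖q‖ / (1 - ‖q‖)) := by push_cast; linarith
    _ ≤ (1 + -(‖q‖ / (1 - ‖q‖))) ^ 24 := one_add_mul_le_pow (by linarith) 24
    _ ≤ ‖eulerFunction q‖ ^ 24 := by
        rw [← sub_eq_add_neg]
        exact pow_le_pow_left₀ (by linarith) (norm_eulerFunction_ge (by linarith)) 24

theorem j_bounded_or_q_small_general (τ : ℂ)
    (hq : ‖qPar τ‖ ≤ Real.exp (-Real.pi * Real.sqrt 3)) :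
    ‖jfun τ‖ ≤ 2500 ∨ ‖qPar τ‖ < 0.001 := by
  refine (lt_or_ge ‖qPar τ‖ 0.001).symm.imp (fun hx => ?_) id
  set q := qPar τ
  have hx' : ‖q‖ ≤ 0.0044 := hq.trans exp_neg_pi_mul_sqrt_three_le
  have hL := norm_one_add_mul_lambertSigma3_le hx'
  have hE := one_sub_mul_le_norm_eulerFunction_pow hx'
  rw [jfun_eq (by linarith), norm_div, norm_pow, norm_mul, norm_pow, div_le_iff₀ (by nlinarith)]
  calc ‖1 + 240 * lambertSigma3 q‖ ^ 3 ≤ (1 + 250.2 * ‖q‖) ^ 3 :=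
        pow_le_pow_left₀ (norm_nonneg _) hL 3
    _ ≤ 2500 * (‖q‖ * (1 - 24.2 * ‖q‖)) := by
        nlinarith [mul_nonneg (sub_nonneg.2 hx) (sub_nonneg.2 hx'),
          mul_nonneg (mul_nonneg (sub_nonneg.2 hx) (sub_nonneg.2 hx')) (sub_nonneg.2 hx)]
    _ ≤ 2500 * (‖q‖ * ‖eulerFunction q‖ ^ 24) := by gcongr

/-- For `τ ∈ ℍ` with `|q_τ| ≤ e^{−π√3}` (in particular for `τ` in the standard
fundamental domain of `SL₂(ℤ)`), either `|j(τ)| ≤ 2500` or `|q_τ| < 0.001`. -/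
theorem j_bounded_or_q_small (τ : ℂ) (hτ : 0 < τ.im)
    (hq : ‖qPar τ‖ ≤ Real.exp (-Real.pi * Real.sqrt 3)) :
    ‖jfun τ‖ ≤ 2500 ∨ ‖qPar τ‖ < 0.001 :=
  j_bounded_or_q_small_general τ hq
end

section
/- Let a = (a₁, a₂) ∈ ℚ² with a₁ ∉ ℤ, and let N be a positive integer such that N·a₁ ∈ ℤ. Then for every τ in the upper half-plane ℍ with |q_τ| ≤ 10^{−N} one has | log|g_a(τ)| − ℓ_a·log|q_τ| | ≤ 3·|q_τ|^{1/N}. -/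
open scoped Real

/-- `e(a) = e^{2πia}` for a rational number `a`. -/
noncomputable def eRat (a : ℚ) : ℂ := Complex.exp (2 * Real.pi * Complex.I * (a : ℂ))

/-- `q_τ^a = e^{2πiaτ}` for a rational number `a`. -/
noncomputable def qRatPow (τ : ℂ) (a : ℚ) : ℂ :=
  Complex.exp (2 * Real.pi * Complex.I * (a : ℂ) * τ)

/-- The second Bernoulli polynomial `B₂(T) = T² − T + 1/6`, evaluated on `ℚ`. -/
def B₂ (t : ℚ) : ℚ := t ^ 2 - t + 1 / 6

/-- `ℓ_a = B₂(a₁ − ⌊a₁⌋)/2` for `a = (a₁, a₂) ∈ ℚ²`. -/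
def ℓSiegel (a : ℚ × ℚ) : ℚ := B₂ (Int.fract a.1) / 2

/-- The Siegel function `g_a(τ)`, defined for `a = (a₁, a₂) ∈ ℚ²` with `a ∉ ℤ²` by the
convergent product
`g_a(τ) = −q_τ^{B₂(a₁)/2}·e(a₂(a₁−1)/2)·(1−q_z)·∏_{n≥1}(1−q_τⁿ q_z)(1−q_τⁿ/q_z)`,
where `q_z = q_τ^{a₁}·e(a₂)`. -/
noncomputable def gSiegel (a : ℚ × ℚ) (τ : ℂ) : ℂ :=
  -(qRatPow τ (B₂ a.1 / 2)) * eRat (a.2 * (a.1 - 1) / 2) *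
    (1 - qRatPow τ a.1 * eRat a.2) *
    ∏' n : ℕ, ((1 - qPar τ ^ (n + 1) * (qRatPow τ a.1 * eRat a.2)) *
      (1 - qPar τ ^ (n + 1) / (qRatPow τ a.1 * eRat a.2)))

/-!
Write `g_a = -q_τ^{B₂(a₁)/2} e(⋯) θ(q_z)` with `θ(w) = (1 - w) (q w; q)_∞ (q/w; q)_∞`,
`q = q_τ`. The quasi-periodicity `w θ(q w) = -θ(w)` and `B₂(t + 1) = B₂(t) + 2t` show that
`|g_a|` only depends on the fractional part `f` of `a₁`. For `0 < f < 1` every factor of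
`θ(q_z)` is `1 - u` with `|u| ≤ 1/10`, where `|log (1 - u)| ≤ (10/9)|u|`; summing the geometric
series gives `|log |θ(q_z)|| ≤ (10/9)(|q|^f + |q|^{1-f})/(1 - |q|)`, and `N a₁ ∈ ℤ` forces
`f, 1 - f ≥ 1/N`.
-/

open Complex in
theorem Complex.norm_log_one_sub_le_s9 {z : ℂ} (hz : ‖z‖ ≤ 1 / 10) :
    ‖log (1 - z)‖ ≤ 10 / 9 * ‖z‖ := by
  have hz1 : ‖-z‖ < 1 := by rw [norm_neg]; linarith
  have h := norm_log_one_add_le hz1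
  rw [← sub_eq_add_neg, norm_neg] at h
  refine h.trans ?_
  have hinv : (1 - ‖z‖)⁻¹ ≤ 10 / 9 := by
    rw [inv_le_comm₀ (by linarith) (by norm_num)]; linarith
  nlinarith [mul_le_mul_of_nonneg_left hinv (sq_nonneg ‖z‖), norm_nonneg z]

theorem exists_tprod_one_sub_eq_cexp {u : ℕ → ℂ} (hu : Summable (‖u ·‖))
    (hu_le : ∀ n, ‖u n‖ ≤ 1 / 10) :
    ∃ S, ∏' n, (1 - u n) = Complex.exp S ∧ ‖S‖ ≤ 10 / 9 * ∑' n, ‖u n‖ := by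
  have hlog_le n := Complex.norm_log_one_sub_le_s9 (hu_le n)
  have hne n : 1 - u n ≠ 0 := sub_ne_zero.mpr fun h => by
    have := hu_le n; rw [← h, norm_one] at this; norm_num at this
  have hsum : Summable fun n => Complex.log (1 - u n) :=
    (hu.mul_left (10 / 9)).of_norm_bounded hlog_le
  refine ⟨_, (Complex.cexp_tsum_eq_tprod hne hsum).symm, ?_⟩
  rw [← tsum_mul_left]
  exact tsum_of_norm_bounded (hu.mul_left (10 / 9)).hasSum hlog_le

/-- The `q`-Pochhammer symbol `(c; q)_∞`. -/
noncomputable def qPochhammer (c q : ℂ) : ℂ := ∏' n : ℕ, (1 - c * q ^ n)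

section qPochhammer

variable {q : ℂ}

theorem multipliable_one_sub_mul_pow (hq : ‖q‖ < 1) (c : ℂ) :
    Multipliable fun n : ℕ => 1 - c * q ^ n := by
  simpa [sub_eq_add_neg] using
    Complex.multipliable_one_add_of_summable ((summable_geometric_of_norm_lt_one hq).mul_left c).neg

theorem qPochhammer_eq_one_sub_mul (hq : ‖q‖ < 1) (c : ℂ) :
    qPochhammer c q = (1 - c) * qPochhammer (c * q) q := by
  have hshift : Multipliable fun n : ℕ => 1 - c * q ^ (n + 1) :=
    (multipliable_one_sub_mul_pow hq (c * q)).congr fun n => by ring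
  rw [qPochhammer, tprod_eq_zero_mul' (f := fun n => 1 - c * q ^ n) hshift, qPochhammer,
    pow_zero, mul_one]
  congr 1
  exact tprod_congr fun n => by ring

theorem exists_qPochhammer_eq_cexp (hq : ‖q‖ < 1) {c : ℂ} (hc : ‖c‖ ≤ 1 / 10) :
    ∃ S, qPochhammer c q = Complex.exp S ∧ ‖S‖ ≤ 10 / 9 * (‖c‖ / (1 - ‖q‖)) := by
  have hnorm n : ‖c * q ^ n‖ = ‖c‖ * ‖q‖ ^ n := by rw [norm_mul, norm_pow]
  have hgeo : HasSum (fun n : ℕ => ‖c * q ^ n‖) (‖c‖ / (1 - ‖q‖)) := by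
    simpa only [hnorm, div_eq_mul_inv] using
      (hasSum_geometric_of_lt_one (norm_nonneg q) hq).mul_left ‖c‖
  have hle n : ‖c * q ^ n‖ ≤ 1 / 10 := by
    rw [hnorm]
    exact (mul_le_of_le_one_right (norm_nonneg c) (pow_le_one₀ (norm_nonneg q) hq.le)).trans hc
  rw [qPochhammer, ← hgeo.tsum_eq]
  exact exists_tprod_one_sub_eq_cexp hgeo.summable hle

end qPochhammer

/-- The Jacobi triple product without its factor `(q; q)_∞`. -/
noncomputable def thetaProd (q w : ℂ) : ℂ := (1 - w) * qPochhammer (q * w) q * qPochhammer (q / w) q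

section thetaProd

variable {q w : ℂ}

theorem mul_thetaProd_mul_left (hq : ‖q‖ < 1) (hq0 : q ≠ 0) (hw : w ≠ 0) :
    w * thetaProd q (q * w) = -thetaProd q w := by
  calc w * thetaProd q (q * w)
      = w * ((1 - q * w) * qPochhammer (q * w * q) q * qPochhammer w⁻¹ q) := by
        rw [thetaProd, show q * (q * w) = q * w * q by ring, show q / (q * w) = w⁻¹ by field_simp]
    _ = (w * (1 - w⁻¹)) * qPochhammer (q * w) q * qPochhammer (w⁻¹ * q) q := by
        rw [qPochhammer_eq_one_sub_mul hq (q * w), qPochhammer_eq_one_sub_mul hq w⁻¹]; ring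
    _ = -thetaProd q w := by
        rw [thetaProd, mul_one_sub, mul_inv_cancel₀ hw, inv_mul_eq_div]; ring

theorem exists_thetaProd_eq_cexp (hw0 : w ≠ 0) (hw : ‖w‖ ≤ 1 / 10) (hqw : ‖q‖ / ‖w‖ ≤ 1 / 10) :
    ∃ S, thetaProd q w = Complex.exp S ∧
      ‖S‖ ≤ 10 / 9 * ((‖w‖ + ‖q‖ / ‖w‖) / (1 - ‖q‖)) := by
  have hw_pos : 0 < ‖w‖ := norm_pos_iff.mpr hw0
  have hq_le : ‖q‖ ≤ ‖w‖ / 10 := by rwa [div_le_iff₀ hw_pos, ← mul_div_right_comm, one_mul] at hqw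
  have hq1 : ‖q‖ < 1 := by linarith
  have hqw_norm : ‖q * w‖ ≤ 1 / 10 := by
    rw [norm_mul]; nlinarith [norm_nonneg q]
  obtain ⟨S₁, hS₁, hS₁_le⟩ := exists_qPochhammer_eq_cexp hq1 hqw_norm
  obtain ⟨S₂, hS₂, hS₂_le⟩ := exists_qPochhammer_eq_cexp hq1 (by rwa [norm_div])
  have hw1 : 1 - w ≠ 0 := by
    rw [sub_ne_zero]; rintro rfl; norm_num at hw
  refine ⟨Complex.log (1 - w) + S₁ + S₂, ?_, ?_⟩
  · rw [thetaProd, hS₁, hS₂, Complex.exp_add, Complex.exp_add, Complex.exp_log hw1]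
  · have h0 := Complex.norm_log_one_sub_le_s9 hw
    rw [norm_mul] at hS₁_le
    rw [norm_div] at hS₂_le
    have hsplit : ‖w‖ + ‖q‖ / ‖w‖ = ‖w‖ * (1 - ‖q‖) + ‖q‖ * ‖w‖ + ‖q‖ / ‖w‖ := by ring
    rw [hsplit, add_div, add_div, mul_div_cancel_right₀ _ (by linarith : (1 - ‖q‖) ≠ 0)]
    calc ‖Complex.log (1 - w) + S₁ + S₂‖ ≤ ‖Complex.log (1 - w)‖ + ‖S₁‖ + ‖S₂‖ :=
          norm_add₃_le
      _ ≤ _ := by linarith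

end thetaProd

theorem qPar_ne_zero (τ : ℂ) : qPar τ ≠ 0 := Complex.exp_ne_zero _

theorem norm_qRatPow (τ : ℂ) (b : ℚ) : ‖qRatPow τ b‖ = ‖qPar τ‖ ^ (b : ℝ) := by
  rw [qRatPow, qPar, Complex.norm_exp, Complex.norm_exp, ← Real.exp_mul]
  congr 1
  simp [Complex.mul_re, Complex.mul_im]
  ring

theorem norm_eRat (c : ℚ) : ‖eRat c‖ = 1 := by
  rw [eRat, Complex.norm_exp]
  simp [Complex.mul_re, Complex.mul_im]

theorem qRatPow_add_one (τ : ℂ) (b : ℚ) : qRatPow τ (b + 1) = qPar τ * qRatPow τ b := by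
  rw [qRatPow, qRatPow, qPar, ← Complex.exp_add]
  congr 1
  push_cast
  ring

/-- The variable `q_z = q_τ^{a₁} e(a₂)` of the Siegel function. -/
noncomputable def qZ (a : ℚ × ℚ) (τ : ℂ) : ℂ := qRatPow τ a.1 * eRat a.2

theorem norm_qZ (a : ℚ × ℚ) (τ : ℂ) : ‖qZ a τ‖ = ‖qPar τ‖ ^ (a.1 : ℝ) := by
  rw [qZ, norm_mul, norm_eRat, mul_one, norm_qRatPow]

theorem qZ_ne_zero (a : ℚ × ℚ) (τ : ℂ) : qZ a τ ≠ 0 :=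
  mul_ne_zero (Complex.exp_ne_zero _) (Complex.exp_ne_zero _)

theorem gSiegel_eq_thetaProd (a : ℚ × ℚ) {τ : ℂ} (hq : ‖qPar τ‖ < 1) :
    gSiegel a τ = -qRatPow τ (B₂ a.1 / 2) * eRat (a.2 * (a.1 - 1) / 2) *
      thetaProd (qPar τ) (qZ a τ) := by
  set q := qPar τ
  set w := qZ a τ
  have hmul : ∏' n : ℕ, ((1 - q ^ (n + 1) * w) * (1 - q ^ (n + 1) / w)) =
      qPochhammer (q * w) q * qPochhammer (q / w) q := by
    rw [qPochhammer, qPochhammer, ← Multipliable.tprod_mul (multipliable_one_sub_mul_pow hq _)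
      (multipliable_one_sub_mul_pow hq _)]
    exact tprod_congr fun n => by ring
  rw [gSiegel, thetaProd, ← qZ, hmul]
  ring

theorem norm_gSiegel (a : ℚ × ℚ) {τ : ℂ} (hq : ‖qPar τ‖ < 1) :
    ‖gSiegel a τ‖ = ‖qPar τ‖ ^ ((B₂ a.1 / 2 : ℚ) : ℝ) * ‖thetaProd (qPar τ) (qZ a τ)‖ := by
  rw [gSiegel_eq_thetaProd a hq, norm_mul, norm_mul, norm_neg, norm_eRat, mul_one, norm_qRatPow]

theorem B₂_add_one (t : ℚ) : B₂ (t + 1) = B₂ t + 2 * t := by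
  simp only [B₂]; ring

theorem periodic_norm_gSiegel (a₂ : ℚ) {τ : ℂ} (hq : ‖qPar τ‖ < 1) :
    Function.Periodic (fun a₁ : ℚ => ‖gSiegel (a₁, a₂) τ‖) 1 := by
  intro a₁
  have hqZ : qZ (a₁ + 1, a₂) τ = qPar τ * qZ (a₁, a₂) τ := by
    rw [qZ, qZ, qRatPow_add_one, mul_assoc]
  have htheta := congrArg norm
    (mul_thetaProd_mul_left hq (qPar_ne_zero τ) (qZ_ne_zero (a₁, a₂) τ))
  rw [norm_mul, norm_neg, norm_qZ] at htheta
  have hexp : ((B₂ (a₁ + 1) / 2 : ℚ) : ℝ) = ((B₂ a₁ / 2 : ℚ) : ℝ) + (a₁ : ℝ) := by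
    rw [B₂_add_one]; push_cast; ring
  simp only [norm_gSiegel _ hq, hqZ]
  rw [hexp, Real.rpow_add (norm_pos_iff.mpr (qPar_ne_zero τ)), mul_assoc, htheta]

theorem norm_gSiegel_eq_fract (a : ℚ × ℚ) {τ : ℂ} (hq : ‖qPar τ‖ < 1) :
    ‖gSiegel a τ‖ = ‖gSiegel (Int.fract a.1, a.2) τ‖ := by
  have h := (periodic_norm_gSiegel a.2 hq).sub_int_mul_eq ⌊a.1⌋ (x := a.1)
  rwa [mul_one, Int.self_sub_floor, eq_comm] at h

theorem abs_log_norm_gSiegel_sub_le (a : ℚ × ℚ) {τ : ℂ} {ρ : ℝ} (hρ : ρ ≤ 1 / 10)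
    (h₁ : ‖qPar τ‖ ^ (a.1 : ℝ) ≤ ρ) (h₂ : ‖qPar τ‖ ^ (1 - (a.1 : ℝ)) ≤ ρ) :
    |Real.log ‖gSiegel a τ‖ - ((B₂ a.1 / 2 : ℚ) : ℝ) * Real.log ‖qPar τ‖| ≤ 3 * ρ := by
  set r := ‖qPar τ‖
  have hr0 : 0 < r := norm_pos_iff.mpr (qPar_ne_zero τ)
  have hρ0 : 0 ≤ ρ := (Real.rpow_pos_of_pos hr0 _).le.trans h₁
  have hr : r ≤ 1 / 10 := by
    have hr_split : r = r ^ (a.1 : ℝ) * r ^ (1 - (a.1 : ℝ)) := by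
      rw [← Real.rpow_add hr0, add_sub_cancel, Real.rpow_one]
    rw [hr_split]
    nlinarith [Real.rpow_pos_of_pos hr0 (a.1 : ℝ), Real.rpow_pos_of_pos hr0 (1 - (a.1 : ℝ))]
  have hqw : r / ‖qZ a τ‖ = r ^ (1 - (a.1 : ℝ)) := by
    rw [norm_qZ, Real.rpow_sub hr0, Real.rpow_one]
  obtain ⟨S, hS, hS_le⟩ := exists_thetaProd_eq_cexp (qZ_ne_zero a τ)
    (by rw [norm_qZ]; linarith) (by rw [hqw]; linarith)
  rw [hqw, norm_qZ] at hS_le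
  rw [norm_gSiegel a (by linarith), hS, Complex.norm_exp,
    Real.log_mul (Real.rpow_pos_of_pos hr0 _).ne' (Real.exp_pos _).ne', Real.log_rpow hr0,
    Real.log_exp, add_sub_cancel_left]
  calc |S.re| ≤ ‖S‖ := Complex.abs_re_le_norm S
    _ ≤ 10 / 9 * ((r ^ (a.1 : ℝ) + r ^ (1 - (a.1 : ℝ))) / (1 - r)) := hS_le
    _ ≤ 10 / 9 * ((ρ + ρ) / (9 / 10)) := by gcongr; linarith
    _ ≤ 3 * ρ := by linarith

theorem Real.rpow_one_div_le_of_le_zpow_neg {r b : ℝ} (hr : 0 ≤ r) (hb : 0 < b) {N : ℕ}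
    (hN : N ≠ 0) (h : r ≤ b ^ (-(N : ℤ))) : r ^ (1 / (N : ℝ)) ≤ 1 / b := by
  rw [zpow_neg, zpow_natCast, ← inv_pow] at h
  calc r ^ (1 / (N : ℝ)) ≤ (b⁻¹ ^ N) ^ (N⁻¹ : ℝ) := by
        rw [one_div]; exact Real.rpow_le_rpow hr h (by positivity)
    _ = 1 / b := by rw [Real.pow_rpow_inv_natCast (by positivity) hN, one_div]

theorem one_div_le_fract_of_mul_eq_int {K : Type*} [Field K] [LinearOrder K]
    [IsStrictOrderedRing K] [FloorRing K] {x : K} {N : ℕ} (hN : 0 < N) {m : ℤ}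
    (hm : N * x = m) (hx : Int.fract x ≠ 0) :
    1 / (N : K) ≤ Int.fract x ∧ 1 / (N : K) ≤ 1 - Int.fract x := by
  have hNK : (0 : K) < N := by exact_mod_cast hN
  have hj : (N : K) * Int.fract x = ((m - N * ⌊x⌋ : ℤ) : K) := by
    rw [Int.fract, mul_sub, hm]; push_cast; ring
  have hpos : (0 : K) < ((m - N * ⌊x⌋ : ℤ) : K) := by
    rw [← hj]; exact mul_pos hNK ((Int.fract_nonneg x).lt_of_ne' hx)
  have hlt : ((m - N * ⌊x⌋ : ℤ) : K) < N := by
    rw [← hj]; exact mul_lt_of_lt_one_right hNK (Int.fract_lt_one x)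
  have hone : (1 : K) ≤ ((m - N * ⌊x⌋ : ℤ) : K) := by
    exact_mod_cast (show (0 : ℤ) < m - N * ⌊x⌋ by exact_mod_cast hpos)
  have hle : ((m - N * ⌊x⌋ : ℤ) : K) ≤ N - 1 := by
    have : m - N * ⌊x⌋ < (N : ℤ) := by exact_mod_cast hlt
    exact_mod_cast (show m - N * ⌊x⌋ ≤ (N : ℤ) - 1 by omega)
  constructor <;> rw [div_le_iff₀' hNK] <;> linarith

theorem siegel_log_estimate_of_not_int_general (a : ℚ × ℚ) (ha : ¬ ∃ m : ℤ, a.1 = (m : ℚ))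
    (N : ℕ) (hN : 0 < N) (hNa : ∃ m : ℤ, (N : ℚ) * a.1 = (m : ℚ))
    (τ : ℂ) (hq : ‖qPar τ‖ ≤ (10 : ℝ) ^ (-(N : ℤ))) :
    |Real.log (‖gSiegel a τ‖) -
        (ℓSiegel a : ℝ) * Real.log (‖qPar τ‖)| ≤
      3 * ‖qPar τ‖ ^ (1 / (N : ℝ)) := by
  set r := ‖qPar τ‖
  have hr0 : 0 < r := norm_pos_iff.mpr (qPar_ne_zero τ)
  have hr1 : r < 1 := hq.trans_lt (zpow_lt_one_of_neg₀ (by norm_num) (by simpa using hN))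
  obtain ⟨m, hm⟩ := hNa
  have hfract : Int.fract a.1 ≠ 0 := fun h => ha ⟨⌊a.1⌋, by linarith [Int.floor_add_fract a.1]⟩
  obtain ⟨hf, hf'⟩ := one_div_le_fract_of_mul_eq_int hN hm hfract
  rw [norm_gSiegel_eq_fract a hr1]
  exact abs_log_norm_gSiegel_sub_le (Int.fract a.1, a.2)
    (Real.rpow_one_div_le_of_le_zpow_neg hr0.le (by norm_num) hN.ne' hq)
    (Real.rpow_le_rpow_of_exponent_ge hr0 hr1.le (by simpa using Rat.cast_le (K := ℝ) |>.mpr hf))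
    (Real.rpow_le_rpow_of_exponent_ge hr0 hr1.le (by simpa using Rat.cast_le (K := ℝ) |>.mpr hf'))

/-- Let `a = (a₁,a₂) ∈ ℚ²` with `a₁ ∉ ℤ` and let `N > 0` satisfy `N·a₁ ∈ ℤ`. Then for
every `τ ∈ ℍ` with `|q_τ| ≤ 10^{−N}` one has
`| log|g_a(τ)| − ℓ_a·log|q_τ| | ≤ 3·|q_τ|^{1/N}`. -/
theorem siegel_log_estimate_of_not_int (a : ℚ × ℚ) (ha : ¬ ∃ m : ℤ, a.1 = (m : ℚ))
    (N : ℕ) (hN : 0 < N) (hNa : ∃ m : ℤ, (N : ℚ) * a.1 = (m : ℚ))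
    (τ : ℂ) (hτ : 0 < τ.im) (hq : ‖qPar τ‖ ≤ (10 : ℝ) ^ (-(N : ℤ))) :
    |Real.log (‖gSiegel a τ‖) -
        (ℓSiegel a : ℝ) * Real.log (‖qPar τ‖)| ≤
      3 * ‖qPar τ‖ ^ (1 / (N : ℝ)) :=
  siegel_log_estimate_of_not_int_general a ha N hN hNa τ hq
end

section
/- Let s and t be positive integers and let M be an s×t matrix with integer entries whose rank (over ℚ) equals s. Let A be a real number such that every entry of M has absolute value at most A. Then there exists a vector b ∈ ℤ^t with ℓ₁-norm ‖b‖₁ = Σ_{j=1}^t |b_j| ≤ s^{s/2+1}·A^{s−1} such that all s coordinates of the vector M·b are strictly positive. -/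
/-!
Choose `s` linearly independent columns of `M`; they form an integer matrix `N` with
`det N ≠ 0`. By Cramer's rule `y = sign (det N) • adj N *ᵥ 1` is integral with
`N *ᵥ y = |det N| • 1`, and each `y k` is, up to sign, the determinant of `N` with its `k`-th
column replaced by `1`, which Hadamard's inequality bounds by `√s ^ s * A ^ (s - 1)`.
Extending `y` by zero to the other columns gives `b`.
-/

open Matrix Finset

theorem Matrix.exists_injective_det_submatrix_ne_zero {K m n : Type*} [Field K] [Fintype m]
    [DecidableEq m] [Fintype n] (M : Matrix m n K) (hM : M.rank = Fintype.card m) :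
    ∃ g : m → n, Function.Injective g ∧ (M.submatrix id g).det ≠ 0 := by
  obtain ⟨κ, a, ha, hspan, hli⟩ := exists_linearIndependent' K M.col
  have : Finite κ := Finite.of_injective a ha
  have : Fintype κ := Fintype.ofFinite κ
  have hcard : Fintype.card κ = Fintype.card m := by
    rw [linearIndependent_iff_card_eq_finrank_span.mp hli, Set.finrank, hspan,
      ← rank_eq_finrank_span_cols, hM]
  let e : m ≃ κ := Fintype.equivOfCardEq hcard.symm
  refine ⟨a ∘ e, ha.comp e.injective, ?_⟩
  rw [← isUnit_iff_ne_zero, ← isUnit_iff_isUnit_det, ← linearIndependent_cols_iff_isUnit]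
  exact hli.comp e e.injective

theorem Matrix.abs_det_le_prod_sqrt_sum_sq {n : ℕ} (B : Matrix (Fin n) (Fin n) ℝ) :
    |B.det| ≤ ∏ j, √(∑ i, B i j ^ 2) := by
  have : Fact (Module.finrank ℝ (EuclideanSpace ℝ (Fin n)) = n) := ⟨finrank_euclideanSpace_fin⟩
  let b := EuclideanSpace.basisFun (Fin n) ℝ
  let v : Fin n → EuclideanSpace ℝ (Fin n) := fun j => WithLp.toLp 2 (B.col j)
  have hdet : b.toBasis.det v = B.det := by
    rw [Module.Basis.det_apply]
    rfl
  have hnorm : ∀ j, ‖v j‖ = √(∑ i, B i j ^ 2) := fun j => by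
    simp [EuclideanSpace.norm_eq, v]
  calc |B.det| = |b.toBasis.orientation.volumeForm v| := by
        rw [b.toBasis.orientation.volumeForm_robust' b v, hdet]
    _ ≤ ∏ j, ‖v j‖ := b.toBasis.orientation.abs_volumeForm_apply_le v
    _ = ∏ j, √(∑ i, B i j ^ 2) := by simp only [hnorm]

theorem Real.sqrt_sum_sq_le_sqrt_card_mul {ι : Type*} [Fintype ι] {x : ι → ℝ} {a : ℝ}
    (ha : 0 ≤ a) (hx : ∀ i, |x i| ≤ a) : √(∑ i, x i ^ 2) ≤ √(Fintype.card ι) * a := by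
  calc √(∑ i, x i ^ 2) ≤ √(∑ _i : ι, a ^ 2) :=
        Real.sqrt_le_sqrt <| sum_le_sum fun i _ => sq_le_sq.mpr ((hx i).trans (le_abs_self a))
    _ = √(Fintype.card ι) * a := by
        rw [sum_const, card_univ, nsmul_eq_mul, Real.sqrt_mul (Nat.cast_nonneg _), Real.sqrt_sq ha]

theorem Matrix.abs_det_updateCol_le {n : ℕ} {B : Matrix (Fin n) (Fin n) ℝ} {A : ℝ}
    (hB : ∀ i j, |B i j| ≤ A) (k : Fin n) {c : Fin n → ℝ} (hc : ∀ i, |c i| ≤ 1) :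
    |(B.updateCol k c).det| ≤ √n ^ n * A ^ (n - 1) := by
  have hA : 0 ≤ A := (abs_nonneg _).trans (hB k k)
  calc |(B.updateCol k c).det| ≤ ∏ j, √(∑ i, B.updateCol k c i j ^ 2) :=
        abs_det_le_prod_sqrt_sum_sq _
    _ ≤ ∏ j, √n * Function.update (fun _ => A) k 1 j := by
        refine prod_le_prod (fun _ _ => Real.sqrt_nonneg _) fun j _ => ?_
        rcases eq_or_ne j k with rfl | hjk
        · simpa using Real.sqrt_sum_sq_le_sqrt_card_mul zero_le_one hc
        · simpa [hjk] using Real.sqrt_sum_sq_le_sqrt_card_mul hA (hB · j)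
    _ = √n ^ n * A ^ (n - 1) := by
        rw [prod_mul_distrib, prod_update_of_mem (mem_univ k)]
        simp [card_sdiff]

theorem Function.Injective.sum_extend_zero {α β N M : Type*} [Fintype α] [Fintype β] [Zero N]
    [AddCommMonoid M] {g : α → β} (hg : g.Injective) (y : α → N) (F : β → N → M)
    (hF : ∀ j, F j 0 = 0) : ∑ j, F j (Function.extend g y 0 j) = ∑ i, F (g i) (y i) :=
  (Fintype.sum_of_injective g hg _ _
    (fun j hj => by rw [Function.extend_apply' _ _ _ hj, Pi.zero_apply, hF])
    (fun i => by rw [hg.extend_apply])).symm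

theorem Matrix.mulVec_extend_zero {R m n k : Type*} [NonUnitalNonAssocSemiring R] [Fintype n]
    [Fintype k]
    (M : Matrix m n R) {g : k → n} (hg : g.Injective) (y : k → R) :
    M *ᵥ Function.extend g y 0 = M.submatrix id g *ᵥ y := by
  ext i
  exact hg.sum_extend_zero y (fun j z => M i j * z) fun _ => mul_zero _

theorem Matrix.mulVec_sign_det_smul_cramer {n : Type*} [Fintype n] [DecidableEq n]
    (N : Matrix n n ℤ) (b : n → ℤ) : N *ᵥ (N.det.sign • N.cramer b) = |N.det| • b := by
  rw [mulVec_smul, mulVec_cramer, smul_smul, Int.sign_mul_self, Int.natCast_natAbs]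

theorem natCast_mul_sqrt_pow_self (n : ℕ) : (n : ℝ) * √n ^ n = (n : ℝ) ^ ((n : ℝ) / 2 + 1) := by
  rw [Real.rpow_add' (Nat.cast_nonneg n) (by positivity), Real.rpow_one, Real.sqrt_eq_rpow,
    ← Real.rpow_natCast, ← Real.rpow_mul (Nat.cast_nonneg n)]
  ring_nf

theorem exists_int_vector_positive_image_general (s t : ℕ)
    (M : Matrix (Fin s) (Fin t) ℤ)
    (hrank : (M.map ((↑) : ℤ → ℚ)).rank = s)
    (A : ℝ) (hA : ∀ i j, |(M i j : ℝ)| ≤ A) :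
    ∃ b : Fin t → ℤ,
      (∑ j, |(b j : ℝ)|) ≤ (s : ℝ) ^ ((s : ℝ) / 2 + 1) * A ^ (s - 1) ∧
      ∀ i, 0 < M.mulVec b i := by
  obtain ⟨g, hg, hdetQ⟩ :=
    (M.map ((↑) : ℤ → ℚ)).exists_injective_det_submatrix_ne_zero (by rwa [Fintype.card_fin])
  set N := M.submatrix id g
  have hdet : N.det ≠ 0 := fun h =>
    hdetQ (by rw [submatrix_map, ← Int.cast_det, h, Int.cast_zero])
  set y := N.det.sign • N.cramer 1
  refine ⟨Function.extend g y 0, ?_, fun i => ?_⟩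
  · have hcoord : ∀ k, |(y k : ℝ)| ≤ √s ^ s * A ^ (s - 1) := fun k => by
      have hyk : |y k| = |(N.updateCol k 1).det| := by
        simp [y, cramer_apply, abs_mul, Int.abs_sign_of_ne_zero hdet]
      rw [← Int.cast_abs, hyk, Int.cast_abs, Int.cast_det, map_updateCol]
      exact abs_det_updateCol_le (fun i j => hA i (g j)) k (by simp)
    calc ∑ j, |((Function.extend g y 0 j : ℤ) : ℝ)| = ∑ k, |(y k : ℝ)| :=
          hg.sum_extend_zero y (fun _ z => |(z : ℝ)|) fun _ => by simp
      _ ≤ ∑ _k : Fin s, √s ^ s * A ^ (s - 1) := sum_le_sum fun k _ => hcoord k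
      _ = _ := by
        rw [sum_const, card_univ, Fintype.card_fin, nsmul_eq_mul, ← mul_assoc,
          natCast_mul_sqrt_pow_self]
  · rw [mulVec_extend_zero M hg, mulVec_sign_det_smul_cramer]
    simpa using hdet

/-- Let `M` be an `s×t` integer matrix of rank `s` (over `ℚ`) whose entries are bounded
by `A` in absolute value. Then there is `b ∈ ℤᵗ` with `‖b‖₁ ≤ s^{s/2+1}·A^{s−1}` such
that all `s` coordinates of `M·b` are strictly positive. -/
theorem exists_int_vector_positive_image (s t : ℕ) (hs : 0 < s) (ht : 0 < t)
    (M : Matrix (Fin s) (Fin t) ℤ)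
    (hrank : (M.map ((↑) : ℤ → ℚ)).rank = s)
    (A : ℝ) (hA : ∀ i j, |(M i j : ℝ)| ≤ A) :
    ∃ b : Fin t → ℤ,
      (∑ j, |(b j : ℝ)|) ≤ (s : ℝ) ^ ((s : ℝ) / 2 + 1) * A ^ (s - 1) ∧
      ∀ i, 0 < M.mulVec b i :=
  exists_int_vector_positive_image_general s t M hrank A hA
end

section
/- Let G be a finite group and let A be a finitely generated torsion-free abelian group on which G acts by group automorphisms. For a ∈ A put a_G = Σ_{g ∈ G} g·a, and let A^G = {a ∈ A : g·a = a for all g ∈ G} be the subgroup of G-invariant elements. Let B be a subgroup of A of finite index. Then B_G = {b_G : b ∈ B} is a subgroup of finite index in A^G. -/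
/-! For an invariant `a` and `n = [A : B]`, the trace of `n • a ∈ B` is `(n * |G|) • a`. So `B_G`
contains `(n * |G|) • A^G`, and `A^G / B_G` is a finitely generated torsion abelian group, hence
finite. -/

/-- The subgroup `A^G` of `G`-invariant elements of `A`. -/
def invariantsAddSubgroup (G A : Type*) [Monoid G] [AddCommGroup A]
    [DistribMulAction G A] : AddSubgroup A where
  carrier := {a | ∀ g : G, g • a = a}
  add_mem' := by
    intro a b ha hb g
    rw [smul_add, ha g, hb g]
  zero_mem' := fun g => smul_zero g
  neg_mem' := by
    intro a ha g
    rw [smul_neg, ha g]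

/-- The "norm" (trace) map `a ↦ a_G = Σ_{g ∈ G} g·a`, as an additive homomorphism. -/
def traceAddHom (G A : Type*) [Group G] [Fintype G] [AddCommGroup A]
    [DistribMulAction G A] : A →+ A where
  toFun a := ∑ g : G, g • a
  map_zero' := by simp
  map_add' x y := by
    simp [smul_add, Finset.sum_add_distrib]

theorem AddSubgroup.fg_of_addGroup_fg {A : Type*} [AddCommGroup A] [AddGroup.FG A]
    (K : AddSubgroup A) : K.FG := by
  have : Module.Finite ℤ A := Module.Finite.iff_addGroup_fg.mpr ‹_›
  rw [← K.toIntSubmodule_toAddSubgroup, ← Submodule.fg_iff_addSubgroup_fg]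
  exact IsNoetherian.noetherian _

theorem AddSubgroup.relIndex_ne_zero_of_nsmul_mem {A : Type*} [AddCommGroup A]
    {H K : AddSubgroup A} (hK : K.FG) {n : ℕ} (hn : n ≠ 0) (h : ∀ a ∈ K, n • a ∈ H) :
    H.relIndex K ≠ 0 := by
  have hle : K.map (nsmulAddMonoidHom n) ≤ H := by
    rintro _ ⟨a, ha, rfl⟩
    exact h a ha
  have := AddSubgroup.isFiniteRelIndex_map_nsmulAddMonoidHom_of_fg hK hn
  exact mt (AddSubgroup.relIndex_eq_zero_of_le_left hle) AddSubgroup.relIndex_ne_zero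

section Trace

variable {G A : Type*} [Group G] [Fintype G] [AddCommGroup A] [DistribMulAction G A]

theorem traceAddHom_apply (a : A) : traceAddHom G A a = ∑ g : G, g • a := rfl

theorem smul_traceAddHom (g : G) (a : A) : g • traceAddHom G A a = traceAddHom G A a := by
  rw [traceAddHom_apply, Finset.smul_sum]
  exact Fintype.sum_equiv (Equiv.mulLeft g) _ _ fun h => (mul_smul g h a).symm

theorem map_traceAddHom_le_invariantsAddSubgroup (B : AddSubgroup A) :
    B.map (traceAddHom G A) ≤ invariantsAddSubgroup G A := by
  rintro _ ⟨b, -, rfl⟩ g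
  exact smul_traceAddHom g b

theorem traceAddHom_of_mem_invariantsAddSubgroup {a : A} (ha : a ∈ invariantsAddSubgroup G A) :
    traceAddHom G A a = Fintype.card G • a := by
  simp only [traceAddHom_apply, show ∀ g : G, g • a = a from ha, Finset.sum_const,
    Finset.card_univ]

end Trace

theorem trace_of_finite_index_subgroup_general (G A : Type*) [Group G] [Fintype G]
    [AddCommGroup A] [DistribMulAction G A]
    (hfg : AddGroup.FG A)
    (B : AddSubgroup A) (hB : B.index ≠ 0) :
    B.map (traceAddHom G A) ≤ invariantsAddSubgroup G A ∧
      ((B.map (traceAddHom G A)).addSubgroupOf (invariantsAddSubgroup G A)).index ≠ 0 := by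
  have := hfg
  refine ⟨map_traceAddHom_le_invariantsAddSubgroup B, ?_⟩
  refine AddSubgroup.relIndex_ne_zero_of_nsmul_mem (AddSubgroup.fg_of_addGroup_fg _)
    (mul_ne_zero hB (Fintype.card_ne_zero (α := G))) fun a ha => ?_
  refine ⟨B.index • a, B.nsmul_index_mem a, ?_⟩
  rw [map_nsmul, traceAddHom_of_mem_invariantsAddSubgroup ha, smul_smul, mul_comm]

/-- Let `G` be a finite group acting by automorphisms on a finitely generated
torsion-free abelian group `A`, and let `B ≤ A` be a subgroup of finite index. Then
`B_G = {Σ_{g∈G} g·b : b ∈ B}` is a subgroup of finite index of the group `A^G` of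
`G`-invariants. -/
theorem trace_of_finite_index_subgroup (G A : Type*) [Group G] [Fintype G]
    [AddCommGroup A] [DistribMulAction G A]
    (hfg : AddGroup.FG A)
    (htf : ∀ (n : ℕ) (a : A), n ≠ 0 → n • a = 0 → a = 0)
    (B : AddSubgroup A) (hB : B.index ≠ 0) :
    B.map (traceAddHom G A) ≤ invariantsAddSubgroup G A ∧
      ((B.map (traceAddHom G A)).addSubgroupOf (invariantsAddSubgroup G A)).index ≠ 0 :=
  trace_of_finite_index_subgroup_general G A hfg B hB
end
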